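/- arXiv:1602.00048 — 2 statements merged into one kernel-verified Lean document; each statement's English description precedes it below -/
import Mathlib

section
/- If $b(k+1)^2 \le b(k)^2 + G^2\alpha(k)^2 - 2\epsilon\alpha(k)$ for all $k > K$, where $b(k) \ge 0$, $G > 0$, $\epsilon > 0$, $\alpha(k) > 0$, $\alpha(k) \to 0$, and $\sum_k \alpha(k) = \infty$, then a contradiction follows (such a sequence $b$ cannot exist). -/
/-! Once `G ^ 2 * α k ≤ ε`, the recursion gives `b (k + 1) ^ 2 + ε * α k ≤ b k ^ 2`, so the
nonnegative quantities `b k ^ 2` telescope to bound the partial sums of `ε * α`, which diverge. -/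

open Filter Finset

theorem sum_Ico_add_le_of_add_le {u a : ℕ → ℝ} {N : ℕ}
    (h : ∀ k, N ≤ k → u (k + 1) + a k ≤ u k) {n : ℕ} (hn : N ≤ n) :
    u n + ∑ k ∈ Ico N n, a k ≤ u N := by
  induction n, hn using Nat.le_induction with
  | base => simp
  | succ n hn ih =>
    rw [sum_Ico_succ_top hn]
    linarith [h n hn]

theorem not_tendsto_sum_atTop_of_eventually_add_le {u a : ℕ → ℝ} (hu : ∀ k, 0 ≤ u k)
    (h : ∀ᶠ k in atTop, u (k + 1) + a k ≤ u k) :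
    ¬ Tendsto (fun n => ∑ k ∈ range n, a k) atTop atTop := by
  intro hdiv
  obtain ⟨N, hN⟩ := eventually_atTop.mp h
  have hbound : ∀ n, N ≤ n → ∑ k ∈ range n, a k ≤ ∑ k ∈ range N, a k + u N := fun n hn => by
    rw [← sum_range_add_sum_Ico a hn]
    linarith [sum_Ico_add_le_of_add_le hN hn, hu n]
  obtain ⟨n, hn_gt, hn_ge⟩ :=
    ((hdiv.eventually_gt_atTop (∑ k ∈ range N, a k + u N)).and (eventually_ge_atTop N)).exists
  exact (hbound n hn_ge).not_gt hn_gt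

theorem stmt1_general (α b : ℕ → ℝ) (G ε : ℝ) (K : ℕ)
    (hα : ∀ k, 0 < α k)
    (hα0 : Filter.Tendsto α Filter.atTop (nhds 0))
    (hdiv : Filter.Tendsto (fun N => ∑ k ∈ Finset.range N, α k) Filter.atTop Filter.atTop)
    (hε : 0 < ε)
    (hrec : ∀ k, K < k → b (k + 1) ^ 2 ≤ b k ^ 2 + G ^ 2 * α k ^ 2 - 2 * ε * α k) :
    False := by
  have hsmall : ∀ᶠ k in atTop, G ^ 2 * α k < ε := by
    have := hα0.const_mul (G ^ 2)
    rw [mul_zero] at this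
    exact this.eventually_lt_const hε
  have hdescent : ∀ᶠ k in atTop, b (k + 1) ^ 2 + ε * α k ≤ b k ^ 2 := by
    filter_upwards [eventually_gt_atTop K, hsmall] with k hk hk_small
    have : G ^ 2 * α k * α k ≤ ε * α k := mul_le_mul_of_nonneg_right hk_small.le (hα k).le
    linarith [hrec k hk]
  refine not_tendsto_sum_atTop_of_eventually_add_le (fun k => sq_nonneg (b k)) hdescent ?_
  simpa only [← mul_sum] using hdiv.const_mul_atTop hε

theorem stmt1 (α b : ℕ → ℝ) (G ε : ℝ) (K : ℕ)
    (hb : ∀ k, 0 ≤ b k)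
    (hα : ∀ k, 0 < α k)
    (hα0 : Filter.Tendsto α Filter.atTop (nhds 0))
    (hdiv : Filter.Tendsto (fun N => ∑ k ∈ Finset.range N, α k) Filter.atTop Filter.atTop)
    (hG : 0 < G) (hε : 0 < ε)
    (hrec : ∀ k, K < k → b (k + 1) ^ 2 ≤ b k ^ 2 + G ^ 2 * α k ^ 2 - 2 * ε * α k) :
    False :=
  stmt1_general α b G ε K hα hα0 hdiv hε hrec
end

section
/- Let $\alpha(k) > 0$ with $\alpha(k) \to 0$ and $\sum_k \alpha(k) = \infty$, and let $\phi : \mathbb{N} \to \mathbb{R}$ satisfy $\phi(k) \ge 0$ for all $k$ and $\phi(k+1) \le \phi(k) + G^2 \alpha(k)^2 - 2\alpha(k)\psi(k)$ with $\psi(k) \ge 0$. Then $\liminf_{k\to\infty} \psi(k) = 0$. -/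
/-!
If `ψ > ε` from some index on, then, as `α → 0`, the recursion eventually gives
`φ (k + 1) + ε α k ≤ φ k`; telescoping and `φ ≥ 0` bound the tail sums of `α`,
contradicting `∑ α = ∞`. Hence `ψ ≤ ε` infinitely often for every `ε > 0`.
-/

open Filter Finset

theorem summable_of_nonneg_descent {α φ : ℕ → ℝ} {c : ℝ} (hc : 0 < c) (hα : ∀ k, 0 ≤ α k)
    (hφ : ∀ k, 0 ≤ φ k) (hdesc : ∀ k, φ (k + 1) + c * α k ≤ φ k) : Summable α := by
  refine summable_of_sum_range_le (c := φ 0 / c) hα fun n => ?_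
  have htelescope : c * ∑ k ∈ range n, α k ≤ φ 0 - φ n := by
    rw [mul_sum, ← sum_range_sub']
    exact sum_le_sum fun k _ => by linarith [hdesc k]
  rw [le_div_iff₀ hc]
  linarith [hφ n]

theorem frequently_le_of_descent {α φ ψ : ℕ → ℝ} {G : ℝ} (hα : ∀ k, 0 ≤ α k)
    (hα0 : Tendsto α atTop (nhds 0)) (hdiv : ¬Summable α) (hφ : ∀ k, 0 ≤ φ k)
    (hrec : ∀ k, φ (k + 1) ≤ φ k + G ^ 2 * α k ^ 2 - 2 * α k * ψ k)
    {ε : ℝ} (hε : 0 < ε) : ∃ᶠ k in atTop, ψ k ≤ ε := by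
  by_contra hfreq
  have hψ : ∀ᶠ k in atTop, ε < ψ k := by simpa using hfreq
  have hαsmall : ∀ᶠ k in atTop, G ^ 2 * α k < ε := by
    simpa using (hα0.const_mul (G ^ 2)).eventually_lt_const (by simpa using hε)
  obtain ⟨M, hM⟩ := eventually_atTop.mp (hψ.and hαsmall)
  have hdesc : ∀ k, φ (k + 1 + M) + ε * α (k + M) ≤ φ (k + M) := fun k => by
    obtain ⟨hψk, hαk⟩ := hM (k + M) (Nat.le_add_left M k)
    rw [Nat.add_right_comm]
    nlinarith [hrec (k + M), hα (k + M)]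
  exact hdiv <| (summable_nat_add_iff M).mp <|
    summable_of_nonneg_descent hε (fun k => hα (k + M)) (fun k => hφ (k + M)) hdesc

theorem liminf_eq_zero_of_nonneg_of_frequently_le {u : ℕ → ℝ} (hu : ∀ k, 0 ≤ u k)
    (hfreq : ∀ ε > 0, ∃ᶠ k in atTop, u k ≤ ε) : liminf u atTop = 0 := by
  have hbdd : IsBoundedUnder (· ≥ ·) atTop u := isBoundedUnder_of ⟨0, hu⟩
  refine le_antisymm (le_of_forall_pos_le_add fun ε hε => ?_) ?_
  · simpa using liminf_le_of_frequently_le (hfreq ε hε) hbdd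
  · exact le_liminf_of_le (IsCoboundedUnder.of_frequently_le (hfreq 1 one_pos))
      (Eventually.of_forall hu)

theorem stmt18_general (α φ ψ : ℕ → ℝ) (G : ℝ)
    (hα : ∀ k, 0 < α k)
    (hα0 : Filter.Tendsto α Filter.atTop (nhds 0))
    (hdiv : Filter.Tendsto (fun N => ∑ k ∈ Finset.range N, α k) Filter.atTop Filter.atTop)
    (hφ : ∀ k, 0 ≤ φ k) (hψ : ∀ k, 0 ≤ ψ k)
    (hrec : ∀ k, φ (k + 1) ≤ φ k + G ^ 2 * α k ^ 2 - 2 * α k * ψ k) :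
    Filter.liminf ψ Filter.atTop = 0 := by
  have hα' : ∀ k, 0 ≤ α k := fun k => (hα k).le
  have hnot : ¬Summable α := (not_summable_iff_tendsto_nat_atTop_of_nonneg hα').mpr hdiv
  exact liminf_eq_zero_of_nonneg_of_frequently_le hψ fun ε hε =>
    frequently_le_of_descent hα' hα0 hnot hφ hrec hε

theorem stmt18 (α φ ψ : ℕ → ℝ) (G : ℝ) (hG : 0 < G)
    (hα : ∀ k, 0 < α k)
    (hα0 : Filter.Tendsto α Filter.atTop (nhds 0))
    (hdiv : Filter.Tendsto (fun N => ∑ k ∈ Finset.range N, α k) Filter.atTop Filter.atTop)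
    (hφ : ∀ k, 0 ≤ φ k) (hψ : ∀ k, 0 ≤ ψ k)
    (hrec : ∀ k, φ (k + 1) ≤ φ k + G ^ 2 * α k ^ 2 - 2 * α k * ψ k) :
    Filter.liminf ψ Filter.atTop = 0 :=
  stmt18_general α φ ψ G hα hα0 hdiv hφ hψ hrec
end
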